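/- Let D : ℝ × ℝ² → ℝ be three times differentiable (in particular twice continuously differentiable) in a neighborhood of (t, r) with ∇D(t,r) ≠ 0; set N := ∇D(t,r)/‖∇D(t,r)‖, λ := −D′_t(t,r)/‖∇D(t,r)‖, and v_ρ := ⟨∇D′_t(t,r) + λ·D″(t,r)N, N⟩/‖∇D(t,r)‖. Then the function s ↦ −D′_t(t+s, r + s·λ·N)/‖∇D(t+s, r + s·λ·N)‖ is differentiable at s = 0 with derivative −(D″_tt(t,r) + λ·⟨∇D′_t(t,r), N⟩)/‖∇D(t,r)‖ − λ·v_ρ. (Consequently the front acceleration of the isoline equals α = −(D″_tt + λ⟨∇D′_t, N⟩)/‖∇D‖ − λ·v_ρ.) -/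

import Mathlib

/-! Along the normal line `γ s = (t + s, r + s • λN)` the chain rule gives
`d/ds D′_t(γ s) = D″_tt + λ⟨∇D′_t, N⟩` and `d/ds ∇D(γ s) = ∂_t∇D + λD″N`, and since `D` is `C²`
its second derivative is symmetric, so the mixed partial `∂_t∇D` is `∇D′_t`. The quotient rule
for `λ = −D′_t/‖∇D‖`, with `d‖∇D‖ = ⟨∇D, d∇D⟩/‖∇D‖ = ‖∇D‖⟨N, d∇D⟩`, then yields the formula. -/

open Real Set
open scoped RealInnerProductSpace
noncomputable section

/-- The plane ℝ². -/
abbrev Plane := EuclideanSpace ℝ (Fin 2)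

/-- Spatial gradient ∇D of the field. -/
def sgrad (D : ℝ × Plane → ℝ) (t : ℝ) (r : Plane) : Plane :=
  gradient (fun p => D (t, p)) r

/-- Partial time derivative D′_t of the field. -/
def dT (D : ℝ × Plane → ℝ) (t : ℝ) (r : Plane) : ℝ :=
  deriv (fun s => D (s, r)) t

/-- Second partial time derivative D″_tt of the field. -/
def dTT (D : ℝ × Plane → ℝ) (t : ℝ) (r : Plane) : ℝ :=
  deriv (fun s => dT D s r) t

/-- Spatial gradient ∇D′_t of the partial time derivative. -/
def sgradDt (D : ℝ × Plane → ℝ) (t : ℝ) (r : Plane) : Plane :=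
  gradient (fun p => dT D t p) r

/-- Spatial Hessian D″ applied to a vector v. -/
def hess (D : ℝ × Plane → ℝ) (t : ℝ) (r : Plane) (v : Plane) : Plane :=
  fderiv ℝ (fun p => sgrad D t p) r v

/-- Clockwise rotation through π/2, i.e. R_{−π/2}. -/
def rotCW (v : Plane) : Plane := WithLp.toLp 2 ![v 1, -(v 0)]

/-- The unit normal N = ∇D/‖∇D‖ of the isoline. -/
def unitN (D : ℝ × Plane → ℝ) (t : ℝ) (r : Plane) : Plane :=
  ‖sgrad D t r‖⁻¹ • sgrad D t r

/-- The unit tangent T = R_{−π/2} N of the isoline. -/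
def unitT (D : ℝ × Plane → ℝ) (t : ℝ) (r : Plane) : Plane :=
  rotCW (unitN D t r)

/-- The density of isolines ρ = ‖∇D‖. -/
def rho (D : ℝ × Plane → ℝ) (t : ℝ) (r : Plane) : ℝ := ‖sgrad D t r‖

/-- The front velocity λ = −D′_t/‖∇D‖ of the isoline. -/
def lam (D : ℝ × Plane → ℝ) (t : ℝ) (r : Plane) : ℝ :=
  -(dT D t r) / ‖sgrad D t r‖

/-- The proportional growth rate v_ρ = ⟨∇D′_t + λD″N, N⟩/‖∇D‖ of the density ρ
    along the moving isoline. -/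
def vRho (D : ℝ × Plane → ℝ) (t : ℝ) (r : Plane) : ℝ :=
  ⟪sgradDt D t r + lam D t r • hess D t r (unitN D t r), unitN D t r⟫ / ‖sgrad D t r‖

/-- The angular velocity ω = −⟨∇D′_t + λD″N, T⟩/‖∇D‖ of rotation of the isoline. -/
def omg (D : ℝ × Plane → ℝ) (t : ℝ) (r : Plane) : ℝ :=
  -⟪sgradDt D t r + lam D t r • hess D t r (unitN D t r), unitT D t r⟫ / ‖sgrad D t r‖

/-- The front acceleration α of the isoline. -/
def alph (D : ℝ × Plane → ℝ) (t : ℝ) (r : Plane) : ℝ :=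
  -(dTT D t r + lam D t r * ⟪sgradDt D t r, unitN D t r⟫) / ‖sgrad D t r‖
    - lam D t r * vRho D t r

/-- The signed curvature κ = −⟨D″T, T⟩/‖∇D‖ of the isoline. -/
def kap (D : ℝ × Plane → ℝ) (t : ℝ) (r : Plane) : ℝ :=
  -⟪hess D t r (unitT D t r), unitT D t r⟫ / ‖sgrad D t r‖

/-- The proportional growth rate τ_ρ = ⟨D″N, T⟩/‖∇D‖ of the density ρ under
    tangential displacement. -/
def tauRho (D : ℝ × Plane → ℝ) (t : ℝ) (r : Plane) : ℝ :=
  ⟪hess D t r (unitN D t r), unitT D t r⟫ / ‖sgrad D t r‖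

/-- The proportional growth rate n_ρ = ⟨D″N, N⟩/‖∇D‖ of the density ρ under
    normal displacement. -/
def nRho (D : ℝ × Plane → ℝ) (t : ℝ) (r : Plane) : ℝ :=
  ⟪hess D t r (unitN D t r), unitN D t r⟫ / ‖sgrad D t r‖

/-- The angular velocity ω_∇ = −⟨∇D′_t, T⟩/‖∇D‖ of rotation of the gradient. -/
def omgGrad (D : ℝ × Plane → ℝ) (t : ℝ) (r : Plane) : ℝ :=
  -⟪sgradDt D t r, unitT D t r⟫ / ‖sgrad D t r‖

/-- The unit velocity-orientation vector e(θ) = (cos θ, sin θ). -/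
def eVec (θ : ℝ) : Plane := WithLp.toLp 2 ![Real.cos θ, Real.sin θ]


open Topology InnerProductSpace

theorem HasDerivAt.norm {E : Type*} [NormedAddCommGroup E] [InnerProductSpace ℝ E]
    {f : ℝ → E} {f' : E} {x : ℝ} (hf : HasDerivAt f f' x) (h0 : f x ≠ 0) :
    HasDerivAt (fun y => ‖f y‖) (⟪f x, f'⟫ / ‖f x‖) x := by
  have h := hf.norm_sq.sqrt (by positivity)
  simp only [Real.sqrt_sq (norm_nonneg _)] at h
  convert h using 1
  field_simp

theorem ContDiffAt.eventually_differentiableAt {E F : Type*} [NormedAddCommGroup E]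
    [NormedSpace ℝ E] [NormedAddCommGroup F] [NormedSpace ℝ F] {f : E → F} {x : E} {n : ℕ}
    (hf : ContDiffAt ℝ n f x) (hn : n ≠ 0) : ∀ᶠ y in 𝓝 x, DifferentiableAt ℝ f y :=
  (hf.eventually (by simp)).mono fun _ hy => hy.differentiableAt (by exact_mod_cast hn)

section Slices

variable {E F : Type*} [NormedAddCommGroup E] [NormedSpace ℝ E]
  [NormedAddCommGroup F] [NormedSpace ℝ F]
  {G : ℝ × E → F} {G' : (ℝ × E) →L[ℝ] F} {t : ℝ} {r : E}

theorem HasFDerivAt.hasDerivAt_fst_slice (hG : HasFDerivAt G G' (t, r)) :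
    HasDerivAt (fun s => G (s, r)) (G' (1, 0)) t :=
  hG.comp_hasDerivAt t ((hasDerivAt_id t).prodMk (hasDerivAt_const t r))

theorem HasFDerivAt.hasFDerivAt_snd_slice (hG : HasFDerivAt G G' (t, r)) :
    HasFDerivAt (fun p => G (t, p)) (G'.comp (.inr ℝ ℝ E)) r :=
  hG.comp r (hasFDerivAt_prodMk_right t r)

theorem DifferentiableAt.hasDerivAt_along_line (hG : DifferentiableAt ℝ G (t, r)) (w : E) :
    HasDerivAt (fun s => G (t + s, r + s • w))
      (deriv (fun s => G (s, r)) t + fderiv ℝ (fun p => G (t, p)) r w) 0 := by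
  have hG' := hG.hasFDerivAt
  have hline : HasDerivAt (fun s : ℝ => (t + s, r + s • w)) ((1 : ℝ), w) 0 := by
    simpa using ((hasDerivAt_id (0 : ℝ)).const_add t).prodMk
      (((hasDerivAt_id (0 : ℝ)).smul_const w).const_add r)
  rw [hG'.hasDerivAt_fst_slice.deriv, hG'.hasFDerivAt_snd_slice.fderiv,
    ContinuousLinearMap.comp_apply,
    ContinuousLinearMap.inr_apply, ← map_add, Prod.mk_add_mk, add_zero, zero_add]
  exact hG'.comp_hasDerivAt_of_eq 0 hline (by simp)

end Slices

section SndGradient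

variable {E : Type*} [NormedAddCommGroup E] [InnerProductSpace ℝ E] [CompleteSpace E]

def sndGradL : ((ℝ × E) →L[ℝ] ℝ) →L[ℝ] E :=
  (toDual ℝ E).symm.toLinearIsometry.toContinuousLinearMap.comp
    ((ContinuousLinearMap.compL ℝ E (ℝ × E) ℝ).flip (.inr ℝ ℝ E))

@[simp]
theorem inner_sndGradL_left (ψ : (ℝ × E) →L[ℝ] ℝ) (w : E) : ⟪sndGradL ψ, w⟫ = ψ (0, w) := by
  simp [sndGradL, toDual_symm_apply]

end SndGradient

section PartialDerivatives

variable {D : ℝ × Plane → ℝ} {t : ℝ} {r : Plane}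

theorem dT_eq_fderiv_apply (h : DifferentiableAt ℝ D (t, r)) :
    dT D t r = fderiv ℝ D (t, r) (1, 0) :=
  h.hasFDerivAt.hasDerivAt_fst_slice.deriv

theorem sgrad_eq_sndGradL (h : DifferentiableAt ℝ D (t, r)) :
    sgrad D t r = sndGradL (fderiv ℝ D (t, r)) := by
  refine ext_inner_right ℝ fun w => ?_
  rw [sgrad, gradient, toDual_symm_apply, h.hasFDerivAt.hasFDerivAt_snd_slice.fderiv,
    inner_sndGradL_left, ContinuousLinearMap.comp_apply, ContinuousLinearMap.inr_apply]

theorem hasFDerivAt_dT (hD : ContDiffAt ℝ 2 D (t, r)) :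
    HasFDerivAt (fun q : ℝ × Plane => dT D q.1 q.2)
      ((ContinuousLinearMap.apply ℝ ℝ ((1 : ℝ), (0 : Plane))).comp
        (fderiv ℝ (fderiv ℝ D) (t, r))) (t, r) := by
  have hF := ((hD.fderiv_right (m := 1) le_rfl).differentiableAt one_ne_zero).hasFDerivAt
  refine ((ContinuousLinearMap.apply ℝ ℝ _).hasFDerivAt.comp _ hF).congr_of_eventuallyEq ?_
  filter_upwards [hD.eventually_differentiableAt two_ne_zero] with q hq
  exact dT_eq_fderiv_apply hq

theorem hasFDerivAt_sgrad (hD : ContDiffAt ℝ 2 D (t, r)) :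
    HasFDerivAt (fun q : ℝ × Plane => sgrad D q.1 q.2)
      (sndGradL.comp (fderiv ℝ (fderiv ℝ D) (t, r))) (t, r) := by
  have hF := ((hD.fderiv_right (m := 1) le_rfl).differentiableAt one_ne_zero).hasFDerivAt
  refine (sndGradL.hasFDerivAt.comp _ hF).congr_of_eventuallyEq ?_
  filter_upwards [hD.eventually_differentiableAt two_ne_zero] with q hq
  exact sgrad_eq_sndGradL hq

theorem deriv_sgrad_eq_sgradDt (hD : ContDiffAt ℝ 2 D (t, r)) :
    deriv (fun s => sgrad D s r) t = sgradDt D t r := by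
  refine ext_inner_right ℝ fun w => ?_
  rw [(hasFDerivAt_sgrad hD).hasDerivAt_fst_slice.deriv, sgradDt, gradient, toDual_symm_apply,
    (hasFDerivAt_dT hD).hasFDerivAt_snd_slice.fderiv]
  simpa using (hD.isSymmSndFDerivAt (by simp)) (1, 0) (0, w)

theorem hasDerivAt_dT_along_line (hD : ContDiffAt ℝ 2 D (t, r)) (w : Plane) :
    HasDerivAt (fun s => dT D (t + s) (r + s • w)) (dTT D t r + ⟪sgradDt D t r, w⟫) 0 := by
  rw [sgradDt, gradient, toDual_symm_apply]
  exact (hasFDerivAt_dT hD).differentiableAt.hasDerivAt_along_line w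

theorem hasDerivAt_sgrad_along_line (hD : ContDiffAt ℝ 2 D (t, r)) (w : Plane) :
    HasDerivAt (fun s => sgrad D (t + s) (r + s • w)) (sgradDt D t r + hess D t r w) 0 := by
  rw [← deriv_sgrad_eq_sgradDt hD]
  exact (hasFDerivAt_sgrad hD).differentiableAt.hasDerivAt_along_line w

end PartialDerivatives

/-- along the moving isoline the front velocity `λ = −D′_t/‖∇D‖` has
derivative `−(D″_tt + λ⟨∇D′_t, N⟩)/‖∇D‖ − λ·v_ρ` at `s = 0`; consequently the front
acceleration of the isoline equals `α = −(D″_tt + λ⟨∇D′_t, N⟩)/‖∇D‖ − λ·v_ρ`. -/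
theorem front_acceleration_formula
    (D : ℝ × Plane → ℝ) (t : ℝ) (r : Plane)
    (hD : ContDiffAt ℝ 3 D (t, r)) (hgrad : sgrad D t r ≠ 0) :
    HasDerivAt (fun s => lam D (t + s) (r + (s * lam D t r) • unitN D t r))
      (-(dTT D t r + lam D t r * ⟪sgradDt D t r, unitN D t r⟫) / ‖sgrad D t r‖
        - lam D t r * vRho D t r) 0 ∧
    -(dTT D t r + lam D t r * ⟪sgradDt D t r, unitN D t r⟫) / ‖sgrad D t r‖
        - lam D t r * vRho D t r = alph D t r := by
  have hD2 : ContDiffAt ℝ 2 D (t, r) := hD.of_le (by norm_num)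
  set L := lam D t r
  set N := unitN D t r
  have hρ := (hasDerivAt_sgrad_along_line hD2 (L • N)).norm (by simpa using hgrad)
  have hlam := (hasDerivAt_dT_along_line hD2 (L • N)).neg.div hρ (by simpa using hgrad)
  simp only [Pi.neg_apply, add_zero, zero_smul] at hlam
  refine ⟨?_, rfl⟩
  simp_rw [mul_smul]
  refine hlam.congr_deriv ?_
  have hm : ‖sgrad D t r‖ ≠ 0 := norm_ne_zero_iff.mpr hgrad
  have hg : sgrad D t r = ‖sgrad D t r‖ • N := by simp [N, unitN, smul_smul, hm]
  rw [vRho, hess, hess, map_smul, real_inner_smul_right, hg, real_inner_smul_left,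
    real_inner_comm _ N, ← hg]
  simp only [L, lam]
  field_simp
  ring
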